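/- arXiv:2407.11411 — 2 statements merged into one kernel-verified Lean document; each statement's English description precedes it below -/
import Mathlib

section
/- Let r, s ≥ 3 be integers, both even. If the pair (Γ⁺(r,s), G⁺(r,s)) is basic of cycle type, then (r,s) = (4,4), (4,2p), or (2p,4) for some odd prime p. -/
/-!
Every translation `t_v` of `X⁺` by a vector `v ∈ X⁺` lies in `G⁺(r,s)`, being a product of powers
of `μ²` and `μν`, and `⟨t_v⟩` is normal in `G⁺(r,s)` as soon as `σ` maps `v` into `ℤv`. If
moreover `v ≡ 0` modulo `(d₁, d₂)` for divisors `d₁ ∣ r`, `d₂ ∣ s` with `d₁, d₂ ≥ 3`, then `(0,0)`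
and its neighbours `(1,1)`, `(1,-1)`, `(-1,1)` lie in four distinct `⟨t_v⟩`-orbits, so the normal
quotient has at least four vertices, one of them of valency three: it is not a cycle. An even
divisor `2 < d < r` of `r` yields `v = (d, 0)`, one of `s` yields `v = (0, d)`, and `r = 2p`,
`s = 2q` with `p`, `q` odd yields `v = (p, q)`; what survives is `(4,4)`, `(4,2p)` and `(2p,4)`.
-/

open SimpleGraph

namespace OG4

variable {V : Type*} {W : Type*}

/-! ### Normal quotients, cycles, and basic pairs -/

/-- The setoid of orbits of a group `N` of permutations of `V`. -/
def orbitSetoid (N : Subgroup (Equiv.Perm V)) : Setoid V := MulAction.orbitRel N V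

/-- The (normal) quotient graph of a graph `Γ` with respect to a group `N` of permutations:
its vertices are the `N`-orbits, two distinct orbits being adjacent iff some vertex of one is
adjacent in `Γ` to some vertex of the other. -/
def quotientGraph (Γ : SimpleGraph V) (N : Subgroup (Equiv.Perm V)) :
    SimpleGraph (Quotient (orbitSetoid N)) :=
  SimpleGraph.fromRel fun a b =>
    ∃ x y : V, Quotient.mk (orbitSetoid N) x = a ∧ Quotient.mk (orbitSetoid N) y = b ∧ Γ.Adj x y

/-- `N` is a normal subgroup of the subgroup `G` (of some ambient group). -/
def NormalIn {G : Type*} [Group G] (N H : Subgroup G) : Prop :=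
  N ≤ H ∧ ∀ h ∈ H, ∀ n ∈ N, h * n * h⁻¹ ∈ N

/-- A graph is isomorphic to a cycle graph `C_m` for some `m ≥ 3`. -/
def IsoCycle (Δ : SimpleGraph W) : Prop :=
  ∃ m : ℕ, 3 ≤ m ∧ Nonempty (Δ ≃g SimpleGraph.cycleGraph m)

/-- Every normal quotient of `(Γ, G)` relative to a nontrivial normal subgroup is degenerate:
it has at most 2 vertices or is a cycle. -/
def IsBasic (Γ : SimpleGraph V) (G : Subgroup (Equiv.Perm V)) : Prop :=
  ∀ N : Subgroup (Equiv.Perm V), NormalIn N G → N ≠ ⊥ →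
    Nat.card (Quotient (orbitSetoid N)) ≤ 2 ∨ IsoCycle (quotientGraph Γ N)

/-- `(Γ, G)` is basic of cycle type. -/
def BasicOfCycleType (Γ : SimpleGraph V) (G : Subgroup (Equiv.Perm V)) : Prop :=
  IsBasic Γ G ∧
    ∃ N : Subgroup (Equiv.Perm V), NormalIn N G ∧ N ≠ ⊥ ∧ IsoCycle (quotientGraph Γ N)

/-- The kernel of the action of `G` on the set of `N`-orbits. -/
def orbitKernel (G N : Subgroup (Equiv.Perm V)) : Subgroup (Equiv.Perm V) where
  carrier := {g | g ∈ G ∧ ∀ x : V,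
    Quotient.mk (orbitSetoid N) (g x) = Quotient.mk (orbitSetoid N) x}
  one_mem' := ⟨G.one_mem, fun x => by simp⟩
  mul_mem' := by
    rintro a b ⟨haG, ha⟩ ⟨hbG, hb⟩
    refine ⟨G.mul_mem haG hbG, fun x => ?_⟩
    rw [Equiv.Perm.mul_apply, ha (b x), hb x]
  inv_mem' := by
    rintro a ⟨haG, ha⟩
    refine ⟨G.inv_mem haG, fun x => ?_⟩
    have h := ha (a⁻¹ x)
    rw [show a (a⁻¹ x) = x from Equiv.apply_symm_apply a x] at h
    exact h.symm

/-- `(Γ, G)` has a pair of independent cyclic normal quotients. -/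
def HasIndepCyclicQuotients (Γ : SimpleGraph V) (G : Subgroup (Equiv.Perm V)) : Prop :=
  ∃ N M : Subgroup (Equiv.Perm V), NormalIn N G ∧ NormalIn M G ∧
    IsoCycle (quotientGraph Γ N) ∧ IsoCycle (quotientGraph Γ M) ∧
    ¬ IsoCycle (quotientGraph Γ (orbitKernel G N ⊓ orbitKernel G M))

/-- `(Γ, G)` is basic of independent-cycle type. -/
def BasicOfIndependentCycleType (Γ : SimpleGraph V) (G : Subgroup (Equiv.Perm V)) : Prop :=
  IsBasic Γ G ∧ HasIndepCyclicQuotients Γ G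

/-- Isomorphism of graph-group pairs: a graph isomorphism conjugating one group onto the other. -/
def PairIso (Γ : SimpleGraph V) (G : Subgroup (Equiv.Perm V))
    (Δ : SimpleGraph W) (H : Subgroup (Equiv.Perm W)) : Prop :=
  ∃ e : Γ ≃g Δ, ∀ h : Equiv.Perm W, h ∈ H ↔ ∃ g ∈ G, e.toEquiv.permCongr g = h

/-! ### Minimal normal subgroups -/

/-- `M` is a minimal normal subgroup of the ambient group. -/
def IsMinimalNormal {G : Type*} [Group G] (M : Subgroup G) : Prop :=
  M.Normal ∧ M ≠ ⊥ ∧ ∀ N : Subgroup G, N.Normal → N ≤ M → N = ⊥ ∨ N = M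

/-- `M` is a minimal normal subgroup of the subgroup `H`. -/
def IsMinimalNormalIn {G : Type*} [Group G] (M H : Subgroup G) : Prop :=
  NormalIn M H ∧ M ≠ ⊥ ∧ ∀ N : Subgroup G, NormalIn N H → N ≤ M → N = ⊥ ∨ N = M

/-! ### The graphs `Γ(r,s)` and their automorphisms -/

/-- In `Γ(r,s)`, the vertex `(i,j)` is joined to the four vertices `(i ± 1, j ± 1)`. -/
def gammaRel (r s : ℕ) (x y : ZMod r × ZMod s) : Prop :=
  (y.1 = x.1 + 1 ∨ y.1 = x.1 - 1) ∧ (y.2 = x.2 + 1 ∨ y.2 = x.2 - 1)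

/-- The graph `Γ(r,s)` on `ℤ_r × ℤ_s`. -/
def Gamma (r s : ℕ) : SimpleGraph (ZMod r × ZMod s) := SimpleGraph.fromRel (gammaRel r s)

/-- `μ : (i,j) ↦ (i+1, j)`. -/
def mu (r s : ℕ) : Equiv.Perm (ZMod r × ZMod s) :=
  (Equiv.addRight (1 : ZMod r)).prodCongr (Equiv.refl (ZMod s))

/-- `ν : (i,j) ↦ (i, j+1)`. -/
def nu (r s : ℕ) : Equiv.Perm (ZMod r × ZMod s) :=
  (Equiv.refl (ZMod r)).prodCongr (Equiv.addRight (1 : ZMod s))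

/-- `σ : (i,j) ↦ (-i, j)`. -/
def sigma (r s : ℕ) : Equiv.Perm (ZMod r × ZMod s) :=
  (Equiv.neg (ZMod r)).prodCongr (Equiv.refl (ZMod s))

/-- `τ : (i,j) ↦ (-i, -j)`. -/
def tau (r s : ℕ) : Equiv.Perm (ZMod r × ZMod s) :=
  (Equiv.neg (ZMod r)).prodCongr (Equiv.neg (ZMod s))

/-- `σν : (i,j) ↦ (-i, j+1)`. -/
def sigmaNu (r s : ℕ) : Equiv.Perm (ZMod r × ZMod s) :=
  (Equiv.neg (ZMod r)).prodCongr (Equiv.addRight (1 : ZMod s))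

/-- `μν : (i,j) ↦ (i+1, j+1)`. -/
def muNu (r s : ℕ) : Equiv.Perm (ZMod r × ZMod s) :=
  (Equiv.addRight (1 : ZMod r)).prodCongr (Equiv.addRight (1 : ZMod s))

/-- `σμν : (i,j) ↦ (-(i+1), j+1)`. -/
def sigmaMuNu (r s : ℕ) : Equiv.Perm (ZMod r × ZMod s) :=
  ((Equiv.addRight (1 : ZMod r)).trans (Equiv.neg (ZMod r))).prodCongr
    (Equiv.addRight (1 : ZMod s))

/-- `μ² : (i,j) ↦ (i+2, j)`. -/
def muSq (r s : ℕ) : Equiv.Perm (ZMod r × ZMod s) :=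
  (Equiv.addRight (2 : ZMod r)).prodCongr (Equiv.refl (ZMod s))

/-- `ν² : (i,j) ↦ (i, j+2)`. -/
def nuSq (r s : ℕ) : Equiv.Perm (ZMod r × ZMod s) :=
  (Equiv.refl (ZMod r)).prodCongr (Equiv.addRight (2 : ZMod s))

/-- `μ^k : (i,j) ↦ (i+k, j)`. -/
def muPow (r s k : ℕ) : Equiv.Perm (ZMod r × ZMod s) :=
  (Equiv.addRight ((k : ZMod r))).prodCongr (Equiv.refl (ZMod s))

/-- `μ^k ν² : (i,j) ↦ (i+k, j+2)`. -/
def muPowNuSq (r s k : ℕ) : Equiv.Perm (ZMod r × ZMod s) :=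
  (Equiv.addRight ((k : ZMod r))).prodCongr (Equiv.addRight (2 : ZMod s))

/-- `G(r,s) = ⟨μ, ν, σ⟩`. -/
def Ggroup (r s : ℕ) : Subgroup (Equiv.Perm (ZMod r × ZMod s)) :=
  Subgroup.closure {mu r s, nu r s, sigma r s}

/-- `H(r,s) = ⟨μ, σν, τ⟩`. -/
def Hgroup (r s : ℕ) : Subgroup (Equiv.Perm (ZMod r × ZMod s)) :=
  Subgroup.closure {mu r s, sigmaNu r s, tau r s}

/-! ### The graphs `Γ⁺(r,s)` (for `r`, `s` even) -/

/-- `X⁺`: the set of `(i,j)` with `i` and `j` of the same parity. -/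
def XPlus (r s : ℕ) : Set (ZMod r × ZMod s) := {x | x.1.val % 2 = x.2.val % 2}

/-- `Γ⁺(r,s)`, the subgraph of `Γ(r,s)` induced on `X⁺`. -/
def GammaPlus (r s : ℕ) : SimpleGraph (XPlus r s) :=
  SimpleGraph.induce (XPlus r s) (Gamma r s)

section parity

lemma val_add_one_mod_two (r : ℕ) (hr : 2 ∣ r) (hr0 : r ≠ 0) (i : ZMod r) :
    (i + 1).val % 2 = (i.val + 1) % 2 := by
  haveI : NeZero r := ⟨hr0⟩
  haveI : Fact (1 < r) := ⟨by have := Nat.le_of_dvd (Nat.pos_of_ne_zero hr0) hr; omega⟩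
  rw [ZMod.val_add, Nat.mod_mod_of_dvd _ hr, ZMod.val_one]

lemma val_add_two_mod_two (r : ℕ) (hr : 2 ∣ r) (hr0 : r ≠ 0) (i : ZMod r) :
    (i + 2).val % 2 = i.val % 2 := by
  have h1 := val_add_one_mod_two r hr hr0 i
  have h2 := val_add_one_mod_two r hr hr0 (i + 1)
  rw [show i + 1 + 1 = i + 2 by ring] at h2
  omega

lemma val_neg_mod_two (r : ℕ) (hr : 2 ∣ r) (hr0 : r ≠ 0) (i : ZMod r) :
    (-i).val % 2 = i.val % 2 := by
  haveI : NeZero r := ⟨hr0⟩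
  rcases eq_or_ne i 0 with h | h
  · simp [h]
  · have h1 : (-i).val = r - i.val := by rw [ZMod.neg_val]; simp [h]
    have h2 : i.val < r := ZMod.val_lt i
    have h3 : i.val ≠ 0 := fun hh => h ((ZMod.val_eq_zero i).mp hh)
    obtain ⟨t, rfl⟩ := hr
    rw [h1]
    omega

end parity

section plusPerms

variable (r s : ℕ)

/-- The restriction of `μ²` to `X⁺`. -/
def muSqP (hr : 2 ∣ r) (hr0 : r ≠ 0) : Equiv.Perm (XPlus r s) :=
  (muSq r s).subtypePerm (by
    intro x
    have h := val_add_two_mod_two r hr hr0 x.1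
    simp only [XPlus, Set.mem_setOf_eq, muSq, Equiv.prodCongr_apply, Prod.map,
      Equiv.coe_addRight, Equiv.refl_apply]
    omega)

/-- The restriction of `ν²` to `X⁺`. -/
def nuSqP (hs : 2 ∣ s) (hs0 : s ≠ 0) : Equiv.Perm (XPlus r s) :=
  (nuSq r s).subtypePerm (by
    intro x
    have h := val_add_two_mod_two s hs hs0 x.2
    simp only [XPlus, Set.mem_setOf_eq, nuSq, Equiv.prodCongr_apply, Prod.map,
      Equiv.coe_addRight, Equiv.refl_apply]
    omega)

/-- The restriction of `μν` to `X⁺`. -/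
def muNuP (hr : 2 ∣ r) (hr0 : r ≠ 0) (hs : 2 ∣ s) (hs0 : s ≠ 0) : Equiv.Perm (XPlus r s) :=
  (muNu r s).subtypePerm (by
    intro x
    have h1 := val_add_one_mod_two r hr hr0 x.1
    have h2 := val_add_one_mod_two s hs hs0 x.2
    simp only [XPlus, Set.mem_setOf_eq, muNu, Equiv.prodCongr_apply, Prod.map,
      Equiv.coe_addRight]
    omega)

/-- The restriction of `σ` to `X⁺`. -/
def sigmaP (hr : 2 ∣ r) (hr0 : r ≠ 0) : Equiv.Perm (XPlus r s) :=
  (sigma r s).subtypePerm (by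
    intro x
    have h := val_neg_mod_two r hr hr0 x.1
    simp only [XPlus, Set.mem_setOf_eq, sigma, Equiv.prodCongr_apply, Prod.map,
      Equiv.neg_apply, Equiv.refl_apply]
    omega)

/-- The restriction of `τ` to `X⁺`. -/
def tauP (hr : 2 ∣ r) (hr0 : r ≠ 0) (hs : 2 ∣ s) (hs0 : s ≠ 0) : Equiv.Perm (XPlus r s) :=
  (tau r s).subtypePerm (by
    intro x
    have h1 := val_neg_mod_two r hr hr0 x.1
    have h2 := val_neg_mod_two s hs hs0 x.2
    simp only [XPlus, Set.mem_setOf_eq, tau, Equiv.prodCongr_apply, Prod.map,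
      Equiv.neg_apply]
    omega)

/-- The restriction of `σμν` to `X⁺`. -/
def sigmaMuNuP (hr : 2 ∣ r) (hr0 : r ≠ 0) (hs : 2 ∣ s) (hs0 : s ≠ 0) :
    Equiv.Perm (XPlus r s) :=
  (sigmaMuNu r s).subtypePerm (by
    intro x
    have h1 := val_neg_mod_two r hr hr0 (x.1 + 1)
    have h2 := val_add_one_mod_two r hr hr0 x.1
    have h3 := val_add_one_mod_two s hs hs0 x.2
    simp only [XPlus, Set.mem_setOf_eq, sigmaMuNu, Equiv.prodCongr_apply, Prod.map,
      Equiv.trans_apply, Equiv.coe_addRight, Equiv.neg_apply]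
    omega)

/-- `G⁺(r,s) = ⟨μ², μν, σ⟩` acting on `X⁺`. -/
def GPlusGroup (hr : 2 ∣ r) (hr0 : r ≠ 0) (hs : 2 ∣ s) (hs0 : s ≠ 0) :
    Subgroup (Equiv.Perm (XPlus r s)) :=
  Subgroup.closure {muSqP r s hr hr0, muNuP r s hr hr0 hs hs0, sigmaP r s hr hr0}

/-- `H⁺(r,s) = ⟨μ², σμν, τ⟩` acting on `X⁺`. -/
def HPlusGroup (hr : 2 ∣ r) (hr0 : r ≠ 0) (hs : 2 ∣ s) (hs0 : s ≠ 0) :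
    Subgroup (Equiv.Perm (XPlus r s)) :=
  Subgroup.closure
    {muSqP r s hr hr0, sigmaMuNuP r s hr hr0 hs hs0, tauP r s hr hr0 hs hs0}

end plusPerms

/-! ### The standard double cover `Γ₂(r,s)` -/

/-- Adjacency of the double cover: `(i,j)_δ ~ (i ± 1, j ± 1)_{δ+1}`. -/
def gamma2Rel (r s : ℕ) (x y : (ZMod r × ZMod s) × ZMod 2) : Prop :=
  (y.1.1 = x.1.1 + 1 ∨ y.1.1 = x.1.1 - 1) ∧ (y.1.2 = x.1.2 + 1 ∨ y.1.2 = x.1.2 - 1) ∧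
    y.2 = x.2 + 1

/-- `Γ₂(r,s)`, the standard double cover of `Γ(r,s)`. -/
def Gamma2 (r s : ℕ) : SimpleGraph ((ZMod r × ZMod s) × ZMod 2) :=
  SimpleGraph.fromRel (gamma2Rel r s)

/-- `μ : (i,j)_δ ↦ (i+1, j)_δ` on the double cover. -/
def muD (r s : ℕ) : Equiv.Perm ((ZMod r × ZMod s) × ZMod 2) :=
  (mu r s).prodCongr (Equiv.refl (ZMod 2))

/-- `ν : (i,j)_δ ↦ (i, j+1)_δ` on the double cover. -/
def nuD (r s : ℕ) : Equiv.Perm ((ZMod r × ZMod s) × ZMod 2) :=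
  (nu r s).prodCongr (Equiv.refl (ZMod 2))

/-- `σ : (i,j)_δ ↦ (i, -j)_{δ+1}` on the double cover. -/
def sigmaD (r s : ℕ) : Equiv.Perm ((ZMod r × ZMod s) × ZMod 2) :=
  ((Equiv.refl (ZMod r)).prodCongr (Equiv.neg (ZMod s))).prodCongr
    (Equiv.addRight (1 : ZMod 2))

/-- `τ : (i,j)_δ ↦ (-i, -j)_δ` on the double cover. -/
def tauD (r s : ℕ) : Equiv.Perm ((ZMod r × ZMod s) × ZMod 2) :=
  (tau r s).prodCongr (Equiv.refl (ZMod 2))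

/-- `G₂(r,s) = ⟨μ, ν, σ, τ⟩` on the double cover. -/
def G2group (r s : ℕ) : Subgroup (Equiv.Perm ((ZMod r × ZMod s) × ZMod 2)) :=
  Subgroup.closure {muD r s, nuD r s, sigmaD r s, tauD r s}

section groups

variable {G : Type*} [Group G]

lemma mem_normalizer_zpowers {g x : G} (h₁ : x * g * x⁻¹ ∈ Subgroup.zpowers g)
    (h₂ : x⁻¹ * g * x ∈ Subgroup.zpowers g) :
    x ∈ Subgroup.normalizer (Subgroup.zpowers g : Set G) := by
  refine Subgroup.mem_normalizer_iff.mpr fun h => ⟨?_, fun hh => ?_⟩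
  · rintro ⟨k, rfl⟩
    simpa only [conj_zpow] using Subgroup.zpow_mem _ h₁ k
  · obtain ⟨k, hk⟩ := hh
    have hh : h = x⁻¹ * g ^ k * x⁻¹⁻¹ := by rw [show g ^ k = x * h * x⁻¹ from hk]; group
    rw [hh, ← conj_zpow, inv_inv]
    exact Subgroup.zpow_mem _ h₂ k

lemma normalIn_zpowers_closure {S : Set G} {g : G} (hg : g ∈ Subgroup.closure S)
    (hS : ∀ x ∈ S, x * g * x⁻¹ ∈ Subgroup.zpowers g ∧ x⁻¹ * g * x ∈ Subgroup.zpowers g) :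
    NormalIn (Subgroup.zpowers g) (Subgroup.closure S) := by
  have hle : Subgroup.closure S ≤ Subgroup.normalizer (Subgroup.zpowers g : Set G) :=
    (Subgroup.closure_le _).mpr fun x hx => mem_normalizer_zpowers (hS x hx).1 (hS x hx).2
  exact ⟨Subgroup.zpowers_le.mpr hg, fun h hh n hn =>
    (Subgroup.mem_normalizer_iff.mp (hle hh) n).mp hn⟩

end groups

section claws

variable {V W : Type*}

lemma not_isoCycle_of_claw {Δ : SimpleGraph W} {a b c d : W} (hb : Δ.Adj a b)
    (hc : Δ.Adj a c) (hd : Δ.Adj a d) (hbcd : [b, c, d].Nodup) : ¬ IsoCycle Δ := by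
  rintro ⟨m, hm, ⟨e⟩⟩
  obtain ⟨n, rfl⟩ : ∃ n, m = n + 2 := ⟨m - 2, by omega⟩
  have hnbr : ∀ {x}, Δ.Adj a x → e x = e a - 1 ∨ e x = e a + 1 := fun {x} hx => by
    have : e x ∈ (cycleGraph (n + 2)).neighborSet (e a) := e.map_adj_iff.mpr hx
    simpa [cycleGraph_neighborSet] using this
  simp only [List.nodup_cons, List.mem_cons, List.not_mem_nil, or_false, not_or] at hbcd
  obtain ⟨⟨hbc, hbd⟩, hcd, -⟩ := hbcd
  have := e.injective.ne hbc
  have := e.injective.ne hbd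
  have := e.injective.ne hcd
  rcases hnbr hb with hb' | hb' <;> rcases hnbr hc with hc' | hc' <;>
    rcases hnbr hd with hd' | hd' <;> simp_all

lemma quotientGraph_adj_mk {Γ : SimpleGraph V} {N : Subgroup (Equiv.Perm V)} {x y : V}
    (hxy : Γ.Adj x y) (hne : Quotient.mk (orbitSetoid N) x ≠ Quotient.mk (orbitSetoid N) y) :
    (quotientGraph Γ N).Adj (Quotient.mk _ x) (Quotient.mk _ y) :=
  (SimpleGraph.fromRel_adj _ _ _).mpr ⟨hne, Or.inl ⟨x, y, rfl, rfl, hxy⟩⟩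

lemma IsBasic.eq_bot_of_claw [Finite V] {Γ : SimpleGraph V} {G N : Subgroup (Equiv.Perm V)}
    (hbasic : IsBasic Γ G) (hN : NormalIn N G) {x y₁ y₂ y₃ : V} (h₁ : Γ.Adj x y₁)
    (h₂ : Γ.Adj x y₂) (h₃ : Γ.Adj x y₃)
    (hnodup : ([x, y₁, y₂, y₃].map (Quotient.mk (orbitSetoid N))).Nodup) : N = ⊥ := by
  by_contra hN0
  have hne : ∀ {y}, y ∈ [y₁, y₂, y₃] →
      Quotient.mk (orbitSetoid N) x ≠ Quotient.mk (orbitSetoid N) y := fun hy h =>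
    (List.nodup_cons.mp hnodup).1 (h ▸ List.mem_map_of_mem hy)
  rcases hbasic N hN hN0 with hcard | hcycle
  · classical
    have := Fintype.ofFinite (Quotient (orbitSetoid N))
    have := hnodup.length_le_card
    rw [Nat.card_eq_fintype_card] at hcard
    simp only [List.length_map, List.length_cons, List.length_nil] at this
    omega
  · exact not_isoCycle_of_claw (quotientGraph_adj_mk h₁ (hne (by simp)))
      (quotientGraph_adj_mk h₂ (hne (by simp))) (quotientGraph_adj_mk h₃ (hne (by simp)))
      (List.nodup_cons.mp hnodup).2 hcycle

end claws

lemma sigmaP_inv (r s : ℕ) (hr : 2 ∣ r) (hr0 : r ≠ 0) :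
    (sigmaP r s hr hr0)⁻¹ = sigmaP r s hr hr0 :=
  inv_eq_of_mul_eq_one_right <| Equiv.ext fun _ => Subtype.ext (Prod.ext (neg_neg _) rfl)

section translations

variable {r s : ℕ} [NeZero r] [NeZero s]

lemma mem_XPlus_iff (hr : 2 ∣ r) (hs : 2 ∣ s) {x : ZMod r × ZMod s} :
    x ∈ XPlus r s ↔ ZMod.castHom hr (ZMod 2) x.1 = ZMod.castHom hs (ZMod 2) x.2 := by
  simp only [XPlus, Set.mem_ofPred_eq, ZMod.castHom_apply, ZMod.cast_eq_val,
    ZMod.natCast_eq_natCast_iff' _ _ 2]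

lemma add_mem_XPlus_iff (hr : 2 ∣ r) (hs : 2 ∣ s) {x v : ZMod r × ZMod s}
    (hv : v ∈ XPlus r s) : x + v ∈ XPlus r s ↔ x ∈ XPlus r s := by
  rw [mem_XPlus_iff hr hs] at hv ⊢
  rw [mem_XPlus_iff hr hs, Prod.fst_add, Prod.snd_add, map_add, map_add, hv, add_left_inj]

lemma neg_fst_mem_XPlus (hr : 2 ∣ r) (hs : 2 ∣ s) {v : ZMod r × ZMod s} (hv : v ∈ XPlus r s) :
    (-v.1, v.2) ∈ XPlus r s := by
  rw [mem_XPlus_iff hr hs] at hv ⊢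
  rwa [map_neg, ZMod.neg_eq_self_mod_two]

lemma two_zero_mem_XPlus (hr : 2 ∣ r) (hs : 2 ∣ s) : ((2, 0) : ZMod r × ZMod s) ∈ XPlus r s := by
  rw [mem_XPlus_iff hr hs, map_ofNat, map_zero]
  rfl

lemma one_one_mem_XPlus (hr : 2 ∣ r) (hs : 2 ∣ s) : ((1, 1) : ZMod r × ZMod s) ∈ XPlus r s := by
  rw [mem_XPlus_iff hr hs, map_one, map_one]

def translate (hr : 2 ∣ r) (hs : 2 ∣ s) (v : ZMod r × ZMod s) (hv : v ∈ XPlus r s) :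
    Equiv.Perm (XPlus r s) :=
  (Equiv.addRight v).subtypePerm fun _ => add_mem_XPlus_iff hr hs hv

variable {hr : 2 ∣ r} {hs : 2 ∣ s}

@[simp]
lemma coe_translate_apply {v : ZMod r × ZMod s} {hv : v ∈ XPlus r s} (x : XPlus r s) :
    (translate hr hs v hv x : ZMod r × ZMod s) = x + v := rfl

@[simp]
lemma coe_translate_zpow_apply {v : ZMod r × ZMod s} {hv : v ∈ XPlus r s} (k : ℤ)
    (x : XPlus r s) : ((translate hr hs v hv ^ k) x : ZMod r × ZMod s) = x + k • v := by
  rw [show translate hr hs v hv ^ k = _ from Equiv.Perm.subtypePerm_zpow _ k _]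
  simp only [Equiv.Perm.subtypePerm_apply, Equiv.zsmul_addRight, Equiv.coe_addRight]

lemma translate_eq_zpow {v w : ZMod r × ZMod s} (hv : v ∈ XPlus r s) (hw : w ∈ XPlus r s)
    {k : ℤ} (h : k • v = w) : translate hr hs w hw = translate hr hs v hv ^ k :=
  Equiv.ext fun x => Subtype.ext (by rw [coe_translate_zpow_apply, coe_translate_apply, h])

lemma translate_commute {v w : ZMod r × ZMod s} (hv : v ∈ XPlus r s) (hw : w ∈ XPlus r s) :
    Commute (translate hr hs v hv) (translate hr hs w hw) :=
  Equiv.ext fun _ => Subtype.ext (add_right_comm _ _ _)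

lemma muSqP_eq_translate :
    muSqP r s hr (NeZero.ne r) = translate hr hs (2, 0) (two_zero_mem_XPlus hr hs) :=
  Equiv.ext fun x => Subtype.ext (by simp [muSqP, muSq, Prod.map, Prod.ext_iff])

lemma muNuP_eq_translate :
    muNuP r s hr (NeZero.ne r) hs (NeZero.ne s) =
      translate hr hs (1, 1) (one_one_mem_XPlus hr hs) :=
  Equiv.ext fun x => Subtype.ext (by simp [muNuP, muNu, Prod.map, Prod.ext_iff])

lemma sigmaP_mul_translate {v : ZMod r × ZMod s} (hv : v ∈ XPlus r s) :
    sigmaP r s hr (NeZero.ne r) * translate hr hs v hv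
      = translate hr hs (-v.1, v.2) (neg_fst_mem_XPlus hr hs hv) * sigmaP r s hr (NeZero.ne r) :=
  Equiv.ext fun x => Subtype.ext (by simp [sigmaP, sigma, Prod.map, add_comm])

lemma translate_mem_GPlusGroup {v : ZMod r × ZMod s} (hv : v ∈ XPlus r s) :
    translate hr hs v hv ∈ GPlusGroup r s hr (NeZero.ne r) hs (NeZero.ne s) := by
  obtain ⟨c, hc⟩ : ∃ c : ℤ, (v.1.val : ℤ) = v.2.val + 2 * c :=
    ⟨(v.1.val - v.2.val) / 2, by have : v.1.val % 2 = v.2.val % 2 := hv; omega⟩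
  have hdecomp : translate hr hs v hv = translate hr hs (1, 1) (one_one_mem_XPlus hr hs) ^
      (v.2.val : ℤ) * translate hr hs (2, 0) (two_zero_mem_XPlus hr hs) ^ c := by
    refine Equiv.ext fun x => Subtype.ext ?_
    have h₁ : v.1 = ((v.1.val : ℤ) : ZMod r) := by simp
    rw [Equiv.Perm.mul_apply, coe_translate_zpow_apply, coe_translate_zpow_apply, add_assoc,
      coe_translate_apply]
    congr 1
    ext
    · rw [h₁, hc]
      push_cast
      rw [Prod.fst_add, Prod.smul_fst, Prod.smul_fst, zsmul_eq_mul, zsmul_eq_mul]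
      push_cast
      ring
    · simp
  rw [hdecomp, ← muNuP_eq_translate, ← muSqP_eq_translate]
  exact mul_mem (zpow_mem (Subgroup.subset_closure (by simp)) _)
    (zpow_mem (Subgroup.subset_closure (by simp)) _)

end translations

section normalQuotients

variable {r s : ℕ} [NeZero r] [NeZero s] {hr : 2 ∣ r} {hs : 2 ∣ s}

lemma normalIn_zpowers_translate {v : ZMod r × ZMod s} (hv : v ∈ XPlus r s) {k : ℤ}
    (hk : k • v = (-v.1, v.2)) :
    NormalIn (Subgroup.zpowers (translate hr hs v hv))
      (GPlusGroup r s hr (NeZero.ne r) hs (NeZero.ne s)) := by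
  have hconj : ∀ {w} (hw : w ∈ XPlus r s),
      translate hr hs w hw * translate hr hs v hv * (translate hr hs w hw)⁻¹
        ∈ Subgroup.zpowers (translate hr hs v hv) ∧
      (translate hr hs w hw)⁻¹ * translate hr hs v hv * translate hr hs w hw
        ∈ Subgroup.zpowers (translate hr hs v hv) := fun hw => by
    have hc := translate_commute (hr := hr) (hs := hs) hw hv
    have hc' := hc.inv_left.mul_inv_cancel
    rw [inv_inv] at hc'
    rw [hc.mul_inv_cancel, hc']
    exact ⟨Subgroup.mem_zpowers _, Subgroup.mem_zpowers _⟩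
  have hσ : sigmaP r s hr (NeZero.ne r) * translate hr hs v hv *
      (sigmaP r s hr (NeZero.ne r))⁻¹ ∈ Subgroup.zpowers (translate hr hs v hv) := by
    rw [sigmaP_mul_translate, mul_inv_cancel_right, translate_eq_zpow hv _ hk]
    exact Subgroup.zpow_mem_zpowers _ _
  refine normalIn_zpowers_closure (translate_mem_GPlusGroup hv) ?_
  simp only [Set.mem_insert_iff, Set.mem_singleton_iff]
  rintro x (rfl | rfl | rfl)
  · rw [muSqP_eq_translate]
    exact hconj _
  · rw [muNuP_eq_translate]
    exact hconj _
  · exact ⟨hσ, by rw [sigmaP_inv]; rwa [sigmaP_inv] at hσ⟩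

lemma exists_zsmul_of_mk_eq_mk {v : ZMod r × ZMod s} {hv : v ∈ XPlus r s} {x y : XPlus r s}
    (h : Quotient.mk (orbitSetoid (Subgroup.zpowers (translate hr hs v hv))) x =
      Quotient.mk _ y) : ∃ k : ℤ, (x : ZMod r × ZMod s) = y + k • v := by
  obtain ⟨⟨g, hg⟩, hgy⟩ := Quotient.exact h
  obtain ⟨k, rfl⟩ := Subgroup.mem_zpowers_iff.mp hg
  exact ⟨k, by rw [← hgy]; exact coe_translate_zpow_apply k y⟩

end normalQuotients

section obstruction

variable {r s : ℕ} [NeZero r] [NeZero s] {hr : 2 ∣ r} {hs : 2 ∣ s}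

lemma nodup_zero_one_neg_one {d : ℕ} (hd : 3 ≤ d) : [(0 : ZMod d), 1, -1].Nodup := by
  have : Fact (2 < d) := ⟨hd⟩
  have : Fact (1 < d) := ⟨by omega⟩
  simp [(ZMod.neg_one_ne_one (n := d)).symm, eq_comm (a := (0 : ZMod d))]

theorem not_isBasic_of_translate {d₁ d₂ : ℕ} (hd₁ : d₁ ∣ r) (hd₂ : d₂ ∣ s) (h₁ : 3 ≤ d₁)
    (h₂ : 3 ≤ d₂) {v : ZMod r × ZMod s} (hv : v ∈ XPlus r s) (hv0 : v ≠ 0) {k : ℤ}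
    (hk : k • v = (-v.1, v.2))
    (hvd : RingHom.prodMap (ZMod.castHom hd₁ (ZMod d₁)) (ZMod.castHom hd₂ (ZMod d₂)) v = 0) :
    ¬ IsBasic (GammaPlus r s) (GPlusGroup r s hr (NeZero.ne r) hs (NeZero.ne s)) := by
  intro hbasic
  set ρ := RingHom.prodMap (ZMod.castHom hd₁ (ZMod d₁)) (ZMod.castHom hd₂ (ZMod d₂))
  set N := Subgroup.zpowers (translate hr hs v hv)
  have hρ : ∀ x y : XPlus r s, Quotient.mk (orbitSetoid N) x = Quotient.mk _ y →
      ρ x = ρ y := fun x y h => by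
    obtain ⟨j, hj⟩ := exists_zsmul_of_mk_eq_mk h
    rw [hj, map_add, map_zsmul, hvd, smul_zero, add_zero]
  let o : XPlus r s := ⟨(0, 0), by simp [XPlus]⟩
  have hN : N ≠ ⊥ := fun h => hv0 <| by
    simpa [o] using congrArg (fun g : Equiv.Perm (XPlus r s) => (g o : ZMod r × ZMod s))
      (Subgroup.zpowers_eq_bot.mp h)
  let a : XPlus r s := ⟨(1, 1), one_one_mem_XPlus hr hs⟩
  let b : XPlus r s := ⟨(1, -1), (mem_XPlus_iff hr hs).mpr <| by
    rw [map_one, map_neg, map_one, ZMod.neg_eq_self_mod_two]⟩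
  let c : XPlus r s := ⟨(-1, 1), neg_fst_mem_XPlus hr hs (one_one_mem_XPlus hr hs)⟩
  have hnodup : ([o, a, b, c].map fun x : XPlus r s => ρ x).Nodup := by
    have := nodup_zero_one_neg_one h₁
    have := nodup_zero_one_neg_one h₂
    simp_all [o, a, b, c, ρ, Prod.ext_iff]
  have hmk : ([o, a, b, c].map (Quotient.mk (orbitSetoid N))).Nodup := by
    refine List.Nodup.of_map (Quotient.lift (fun x : XPlus r s => ρ x)
      fun x y hxy => hρ x y (Quotient.sound hxy)) ?_
    rwa [List.map_map]
  have hne : ∀ x ∈ [a, b, c], (o : ZMod r × ZMod s) ≠ x := fun x hx h =>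
    (List.nodup_cons.mp hnodup).1 (List.mem_map.mpr ⟨x, hx, congrArg ρ h.symm⟩)
  have hadj : ∀ x ∈ [a, b, c], gammaRel r s o x → (GammaPlus r s).Adj o x := fun x hx hrel =>
    (SimpleGraph.fromRel_adj _ _ _).mpr ⟨hne x hx, Or.inl hrel⟩
  refine hN (hbasic.eq_bot_of_claw (normalIn_zpowers_translate hv hk)
    (hadj a (by simp) ⟨Or.inl (zero_add 1).symm, Or.inl (zero_add 1).symm⟩)
    (hadj b (by simp) ⟨Or.inl (zero_add 1).symm, Or.inr (zero_sub 1).symm⟩)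
    (hadj c (by simp) ⟨Or.inr (zero_sub 1).symm, Or.inl (zero_add 1).symm⟩) hmk)

theorem not_isBasic_of_divisors {d₁ d₂ : ℕ} (hd₁ : d₁ ∣ r) (hd₂ : d₂ ∣ s) (h₁ : 3 ≤ d₁)
    (h₂ : 3 ≤ d₂) (hpar : d₁ % 2 = d₂ % 2) (hproper : d₁ < r ∨ d₂ < s)
    (hrefl : r ∣ 2 * d₁ ∨ s ∣ 2 * d₂) :
    ¬ IsBasic (GammaPlus r s) (GPlusGroup r s hr (NeZero.ne r) hs (NeZero.ne s)) := by
  set v : ZMod r × ZMod s := (d₁, d₂)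
  have hv : v ∈ XPlus r s := by
    rw [mem_XPlus_iff hr hs, map_natCast, map_natCast]
    exact (ZMod.natCast_eq_natCast_iff' _ _ 2).mpr hpar
  have hv0 : v ≠ 0 := by
    intro h
    rcases hproper with hlt | hlt
    · have := (ZMod.natCast_eq_zero_iff d₁ r).mp (congrArg Prod.fst h)
      exact absurd (Nat.le_of_dvd (by omega) this) (by omega)
    · have := (ZMod.natCast_eq_zero_iff d₂ s).mp (congrArg Prod.snd h)
      exact absurd (Nat.le_of_dvd (by omega) this) (by omega)
  have hvd : RingHom.prodMap (ZMod.castHom hd₁ (ZMod d₁)) (ZMod.castHom hd₂ (ZMod d₂)) v = 0 := by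
    simp [v]
  -- `σ` fixes `v` when `r ∣ 2 d₁` and negates it when `s ∣ 2 d₂`.
  rcases hrefl with h | h
  · refine not_isBasic_of_translate hd₁ hd₂ h₁ h₂ hv hv0 (k := 1) ?_ hvd
    have : (d₁ : ZMod r) + d₁ = 0 := by
      rw [← Nat.cast_add, ← two_mul, ZMod.natCast_eq_zero_iff]; exact h
    simp [v, eq_neg_iff_add_eq_zero, this]
  · refine not_isBasic_of_translate hd₁ hd₂ h₁ h₂ hv hv0 (k := -1) ?_ hvd
    have : (d₂ : ZMod s) + d₂ = 0 := by
      rw [← Nat.cast_add, ← two_mul, ZMod.natCast_eq_zero_iff]; exact h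
    simp [v, neg_eq_iff_add_eq_zero, this]

end obstruction

lemma eq_four_or_eq_two_mul_odd_prime {r : ℕ} (h3 : 3 ≤ r) (hr : 2 ∣ r)
    (h : ∀ d, d ∣ r → 2 ∣ d → 2 < d → d = r) : r = 4 ∨ ∃ p : ℕ, p.Prime ∧ Odd p ∧ r = 2 * p := by
  obtain ⟨m, rfl⟩ := hr
  by_cases hm : m.Prime
  · rcases hm.eq_two_or_odd' with rfl | hodd
    · exact Or.inl rfl
    · exact Or.inr ⟨m, hm, hodd, rfl⟩
  · obtain ⟨e, he, he2, hem⟩ := Nat.exists_dvd_of_not_prime2 (by omega) hm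
    have := h (2 * e) (mul_dvd_mul_left 2 he) (dvd_mul_right 2 e) (by omega)
    omega

/-- if `(Γ⁺(r,s), G⁺(r,s))` (with `r,s ≥ 3` both even) is basic of cycle type,
then `(r,s)` is `(4,4)`, `(4,2p)` or `(2p,4)` for an odd prime `p`. -/
theorem stmt1 (r s : ℕ) (hr : 3 ≤ r) (hs : 3 ≤ s) (hre : 2 ∣ r) (hse : 2 ∣ s)
    (hbasic : BasicOfCycleType (GammaPlus r s)
      (GPlusGroup r s hre (by omega) hse (by omega))) :
    (r = 4 ∧ s = 4) ∨ (∃ p : ℕ, p.Prime ∧ Odd p ∧ r = 4 ∧ s = 2 * p) ∨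
      (∃ p : ℕ, p.Prime ∧ Odd p ∧ r = 2 * p ∧ s = 4) := by
  have : NeZero r := ⟨by omega⟩
  have : NeZero s := ⟨by omega⟩
  have hrclass := eq_four_or_eq_two_mul_odd_prime hr hre fun d hdr hd2 hd3 => by
    by_contra hne
    exact not_isBasic_of_divisors hdr dvd_rfl (by omega) hs (by omega)
      (Or.inl (lt_of_le_of_ne (Nat.le_of_dvd (by omega) hdr) hne)) (Or.inr (dvd_mul_left s 2))
      hbasic.1
  have hsclass := eq_four_or_eq_two_mul_odd_prime hs hse fun d hds hd2 hd3 => by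
    by_contra hne
    exact not_isBasic_of_divisors dvd_rfl hds hr (by omega) (by omega)
      (Or.inr (lt_of_le_of_ne (Nat.le_of_dvd (by omega) hds) hne)) (Or.inl (dvd_mul_left r 2))
      hbasic.1
  rcases hrclass with hr4 | ⟨p, hp, hpo, rfl⟩ <;> rcases hsclass with hs4 | ⟨q, hq, hqo, rfl⟩
  · exact Or.inl ⟨hr4, hs4⟩
  · exact Or.inr (Or.inl ⟨q, hq, hqo, hr4, rfl⟩)
  · exact Or.inr (Or.inr ⟨p, hp, hpo, rfl, hs4⟩)
  · have := hp.two_le; have := hq.two_le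
    rw [Nat.odd_iff] at hpo hqo
    exact absurd hbasic.1 (not_isBasic_of_divisors (dvd_mul_left p 2) (dvd_mul_left q 2)
      (by omega) (by omega) (by omega) (Or.inl (by omega)) (Or.inl dvd_rfl))

end OG4
end

section
/- Let G be a group and H a subgroup of G of index 2, and let M be a minimal normal subgroup of H. Then either (i) M is normal in G, and in that case M is a minimal normal subgroup of G contained in H; or (ii) there exists g ∈ G with g ∉ H such that M^g ≠ M, M ∩ M^g is trivial, and the subgroup generated by M and M^g (which is their internal direct product M × M^g) is a normal subgroup of G contained in H. -/
open SimpleGraph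

namespace OG4

variable {V : Type*} {W : Type*}

/-! Conjugation by `g ∉ H` permutes the minimal normal subgroups of `H`, and it is an involution
on them because `g² ∈ H`. If it fixes `M`, then `M` is normalised by `H` and by `g`, hence by `G`.
Otherwise `M` and `M^g` are distinct minimal normal subgroups of `H`, so they meet trivially and
commute elementwise, and `g` swaps them, so it normalises `M ⊔ M^g`. -/

section MinimalNormalIn

variable {G : Type*} [Group G]

lemma NormalIn.map {G' : Type*} [Group G'] {M H : Subgroup G} (hM : NormalIn M H) (f : G →* G') :
    NormalIn (M.map f) (H.map f) := by
  refine ⟨Subgroup.map_mono hM.1, ?_⟩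
  rintro _ ⟨h, hh, rfl⟩ _ ⟨n, hn, rfl⟩
  exact ⟨h * n * h⁻¹, hM.2 h hh n hn, by simp⟩

lemma NormalIn.inf {M N H : Subgroup G} (hM : NormalIn M H) (hN : NormalIn N H) :
    NormalIn (M ⊓ N) H :=
  ⟨inf_le_left.trans hM.1, fun h hh n hn => ⟨hM.2 h hh n hn.1, hN.2 h hh n hn.2⟩⟩

lemma NormalIn.map_conj_eq {M H : Subgroup G} (hM : NormalIn M H) {h : G} (hh : h ∈ H) :
    M.map (MulAut.conj h : G →* G) = M := by
  rw [← Subgroup.mem_normalizer_iff_map_conj_eq, Subgroup.mem_normalizer_iff]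
  refine fun n => ⟨hM.2 h hh n, fun hn => ?_⟩
  simpa [mul_assoc] using hM.2 h⁻¹ (H.inv_mem hh) _ hn

lemma NormalIn.commute {M N H : Subgroup G} (hM : NormalIn M H) (hN : NormalIn N H)
    (hMN : M ⊓ N = ⊥) {a b : G} (ha : a ∈ M) (hb : b ∈ N) : a * b = b * a := by
  have hcomm : a * b * a⁻¹ * b⁻¹ ∈ M ⊓ N := by
    constructor
    · simpa [mul_assoc] using M.mul_mem ha (hM.2 b (hN.1 hb) _ (M.inv_mem ha))
    · exact N.mul_mem (hN.2 a (hM.1 ha) b hb) (N.inv_mem hb)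
  rw [hMN, Subgroup.mem_bot, mul_inv_eq_one, mul_inv_eq_iff_eq_mul] at hcomm
  exact hcomm

lemma IsMinimalNormalIn.map_equiv {G' : Type*} [Group G'] {M H : Subgroup G}
    (hM : IsMinimalNormalIn M H) (e : G ≃* G') :
    IsMinimalNormalIn (M.map (e : G →* G')) (H.map (e : G →* G')) := by
  refine ⟨hM.1.map _, ?_, fun N hN hNM => ?_⟩
  · rw [Ne, Subgroup.map_eq_bot_iff_of_injective _ e.injective]
    exact hM.2.1
  · have hN' : NormalIn (N.map (e.symm : G' →* G)) H := by
      simpa only [(Subgroup.map_symm_eq_iff_map_eq H).mpr rfl] using hN.map (e.symm : G' →* G)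
    have hNM' : N.map (e.symm : G' →* G) ≤ M := by
      rwa [Subgroup.map_le_iff_le_comap, Subgroup.comap_equiv_eq_map_symm, MulEquiv.symm_symm]
    rcases hM.2.2 _ hN' hNM' with h | h
    · rw [Subgroup.map_symm_eq_iff_map_eq, Subgroup.map_bot] at h
      exact .inl h.symm
    · exact .inr ((Subgroup.map_symm_eq_iff_map_eq _).mp h).symm

lemma IsMinimalNormalIn.inf_eq_bot_or_eq {M N H : Subgroup G} (hM : IsMinimalNormalIn M H)
    (hN : IsMinimalNormalIn N H) : M ⊓ N = ⊥ ∨ M = N := by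
  refine (hM.2.2 _ (hM.1.inf hN.1) inf_le_left).imp id fun h => ?_
  have hMN : M ≤ N := h ▸ inf_le_right
  exact (hN.2.2 M hM.1 hMN).resolve_left hM.2.1

lemma IsMinimalNormalIn.isMinimalNormal {M H : Subgroup G} (hM : IsMinimalNormalIn M H)
    (hMn : M.Normal) : IsMinimalNormal M :=
  ⟨hMn, hM.2.1, fun N hN hNM =>
    hM.2.2 N ⟨hNM.trans hM.1.1, fun h _ n hn => hN.conj_mem n hn h⟩ hNM⟩

lemma map_conj_map_conj (K : Subgroup G) (a b : G) :
    (K.map (MulAut.conj a : G →* G)).map (MulAut.conj b : G →* G) =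
      K.map (MulAut.conj (b * a) : G →* G) := by
  rw [Subgroup.map_map, map_mul]
  rfl

lemma eq_top_of_index_eq_two_of_lt {H L : Subgroup G} (hH : H.index = 2) (hHL : H < L) :
    L = ⊤ := by
  obtain ⟨g, hgL, hgH⟩ := SetLike.exists_of_lt hHL
  refine eq_top_iff.mpr fun x _ => ?_
  by_cases hx : x ∈ H
  · exact hHL.le hx
  · have hxg : x * g⁻¹ ∈ H :=
      (Subgroup.mul_mem_iff_of_index_two hH).mpr (by simpa [hx] using hgH)
    simpa using L.mul_mem (hHL.le hxg) hgL

lemma normal_of_index_eq_two_of_map_conj_eq {H K : Subgroup G} (hH : H.index = 2)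
    (hHK : ∀ h ∈ H, K.map (MulAut.conj h : G →* G) = K) {g : G} (hgH : g ∉ H)
    (hgK : K.map (MulAut.conj g : G →* G) = K) : K.Normal := by
  rw [← Subgroup.normalizer_eq_top_iff]
  refine eq_top_of_index_eq_two_of_lt hH
    (SetLike.lt_iff_le_and_exists.mpr ⟨fun h hh => ?_, g, ?_, hgH⟩)
  · exact Subgroup.mem_normalizer_iff_map_conj_eq.mpr (hHK h hh)
  · exact Subgroup.mem_normalizer_iff_map_conj_eq.mpr hgK

end MinimalNormalIn

/-- a minimal normal subgroup of an index-2 subgroup is either minimal normal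
in the whole group, or together with a conjugate generates a normal subgroup which is their
internal direct product. -/
theorem stmt12 (G : Type*) [Group G] (H : Subgroup G) (hH : H.index = 2)
    (M : Subgroup G) (hM : IsMinimalNormalIn M H) :
    (M.Normal ∧ M ≤ H ∧ IsMinimalNormal M) ∨
    (∃ g : G, g ∉ H ∧
      M.map (MulAut.conj g⁻¹).toMonoidHom ≠ M ∧
      M ⊓ M.map (MulAut.conj g⁻¹).toMonoidHom = ⊥ ∧
      (∀ a ∈ M, ∀ b ∈ M.map (MulAut.conj g⁻¹).toMonoidHom, a * b = b * a) ∧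
      (M ⊔ M.map (MulAut.conj g⁻¹).toMonoidHom).Normal ∧
      M ⊔ M.map (MulAut.conj g⁻¹).toMonoidHom ≤ H) := by
  simp only [MulEquiv.toMonoidHom_eq_coe]
  have hHn : H.Normal := Subgroup.normal_of_index_eq_two hH
  obtain ⟨g, hgH⟩ := SetLike.exists_not_mem_of_ne_top H fun h => by simp [h] at hH
  have hg'H : g⁻¹ ∉ H := by rwa [inv_mem_iff]
  set Mg := M.map (MulAut.conj g⁻¹ : G →* G)
  have hMg : IsMinimalNormalIn Mg H := by
    simpa only [hHn.map_conj_eq] using hM.map_equiv (MulAut.conj g⁻¹)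
  by_cases hc : Mg = M
  · have hMn : M.Normal :=
      normal_of_index_eq_two_of_map_conj_eq hH (fun _ => hM.1.map_conj_eq) hg'H hc
    exact .inl ⟨hMn, hM.1.1, hM.isMinimalNormal hMn⟩
  have hbot : M ⊓ Mg = ⊥ := (hM.inf_eq_bot_or_eq hMg).resolve_right (Ne.symm hc)
  have hMgg : Mg.map (MulAut.conj g⁻¹ : G →* G) = M := by
    rw [map_conj_map_conj, hM.1.map_conj_eq (Subgroup.mul_self_mem_of_index_two hH _)]
  have hnormal : (M ⊔ Mg).Normal := by
    refine normal_of_index_eq_two_of_map_conj_eq hH (fun h hh => ?_) hg'H ?_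
    · rw [Subgroup.map_sup, hM.1.map_conj_eq hh, hMg.1.map_conj_eq hh]
    · rw [Subgroup.map_sup, hMgg, sup_comm]
  exact .inr ⟨g, hgH, hc, hbot, fun a ha b hb => hM.1.commute hMg.1 hbot ha hb, hnormal,
    sup_le hM.1.1 hMg.1.1⟩

end OG4
end
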